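/- arXiv:1807.08145 — 4 statements merged into one kernel-verified Lean document; each statement's English description precedes it below -/
import Mathlib

section
/- Let g(x) = x² on ℝ and ħ > 0. For all integers j, r ≥ 0 and any bounded interval containing 0, there exists a constant C_{j,r} such that ∫ |x|^r · |d^j/dx^j (e^{-x²/ħ})| dx ≤ C_{j,r} · ħ^{(r-j)/2 + 1/2} for all 0 < ħ ≤ 1. -/
open MeasureTheory Real Set

private lemma gauss_pow_bound (n : ℕ) (y : ℝ) :
    |y| ^ n * Real.exp (-(y ^ 2 / 8)) ≤ n.factorial * Real.exp 2 := by
  have hf : (0:ℝ) < n.factorial := by positivity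
  have h1 : |y| ^ n ≤ n.factorial * Real.exp |y| := by
    have h := Real.pow_div_factorial_le_exp |y| (abs_nonneg y) n
    calc |y| ^ n = (|y| ^ n / n.factorial) * n.factorial := by field_simp
    _ ≤ Real.exp |y| * n.factorial := mul_le_mul_of_nonneg_right h hf.le
    _ = n.factorial * Real.exp |y| := mul_comm _ _
  calc |y| ^ n * Real.exp (-(y ^ 2 / 8))
      ≤ (n.factorial * Real.exp |y|) * Real.exp (-(y ^ 2 / 8)) :=
        mul_le_mul_of_nonneg_right h1 (Real.exp_nonneg _)
  _ = n.factorial * Real.exp (|y| + -(y ^ 2 / 8)) := by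
      rw [mul_assoc, ← Real.exp_add]
  _ ≤ n.factorial * Real.exp 2 := by
      refine mul_le_mul_of_nonneg_left (Real.exp_le_exp.mpr ?_) hf.le
      nlinarith [sq_nonneg (|y| - 4), sq_abs y]

private lemma poly_gauss_bound (p : Polynomial ℝ) :
    ∃ C : ℝ, 0 ≤ C ∧ ∀ y : ℝ, |p.eval y| * Real.exp (-(y ^ 2 / 8)) ≤ C := by
  induction p using Polynomial.induction_on' with
  | add p q hp hq =>
    obtain ⟨C1, hC1, h1⟩ := hp
    obtain ⟨C2, hC2, h2⟩ := hq
    refine ⟨C1 + C2, by linarith, fun y => ?_⟩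
    calc |(p + q).eval y| * Real.exp (-(y ^ 2 / 8))
        ≤ (|p.eval y| + |q.eval y|) * Real.exp (-(y ^ 2 / 8)) := by
          rw [Polynomial.eval_add]
          exact mul_le_mul_of_nonneg_right (abs_add_le _ _) (Real.exp_nonneg _)
    _ = |p.eval y| * Real.exp (-(y ^ 2 / 8)) + |q.eval y| * Real.exp (-(y ^ 2 / 8)) := by ring
    _ ≤ C1 + C2 := add_le_add (h1 y) (h2 y)
  | monomial n c =>
    refine ⟨|c| * (n.factorial * Real.exp 2), by positivity, fun y => ?_⟩
    rw [Polynomial.eval_monomial, abs_mul, abs_pow, mul_assoc]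
    exact mul_le_mul_of_nonneg_left (gauss_pow_bound n y) (abs_nonneg c)

/-- Weighted `L¹` estimates for derivatives of the Gaussian `e^{-x²/ℏ}`:
`∫ |x|^r |d^j/dx^j e^{-x²/ℏ}| dx ≤ C ℏ^{(r-j)/2 + 1/2}` on any bounded interval containing `0`. -/
theorem stmt_1 (j r : ℕ) (a b : ℝ) (ha : a < 0) (hb : 0 < b) :
    ∃ C : ℝ, ∀ ℏ : ℝ, 0 < ℏ → ℏ ≤ 1 →
      (∫ x in a..b, |x| ^ r * |iteratedDeriv j (fun y : ℝ => Real.exp (-y ^ 2 / ℏ)) x|)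
        ≤ C * ℏ ^ (((r : ℝ) - j) / 2 + 1 / 2) := by
  obtain ⟨Cp, hCp0, hCp⟩ := poly_gauss_bound ((Polynomial.hermite j).map (Int.castRingHom ℝ))
  refine ⟨(r.factorial * Real.exp 2) * Cp * (2 * Real.sqrt π) * (Real.sqrt 2) ^ j,
    fun ℏ hℏ hℏ1 => ?_⟩
  have hab : a ≤ b := le_of_lt (ha.trans hb)
  set s : ℝ := Real.sqrt ℏ with hs_def
  have hs : 0 < s := Real.sqrt_pos.mpr hℏ
  have hs2 : s ^ 2 = ℏ := Real.sq_sqrt hℏ.le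
  set c : ℝ := Real.sqrt (2 / ℏ) with hc_def
  have hc : 0 < c := Real.sqrt_pos.mpr (by positivity)
  have hc2 : c ^ 2 = 2 / ℏ := Real.sq_sqrt (by positivity)
  have hcs : c = Real.sqrt 2 / s := by rw [hc_def, hs_def, Real.sqrt_div (by norm_num : (0:ℝ) ≤ 2)]
  -- the gaussian as a rescaling of the standard one
  have heq : ∀ y : ℝ, Real.exp (-y ^ 2 / ℏ) = Real.exp (-((c * y) ^ 2 / 2)) := by
    intro y
    congr 1
    have : (c * y) ^ 2 = 2 / ℏ * y ^ 2 := by rw [mul_pow, hc2]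
    rw [this]; field_simp
  have hsmooth : ContDiff ℝ (↑j) (fun t : ℝ => Real.exp (-(t ^ 2 / 2))) := by
    have : ContDiff ℝ (⊤ : ℕ∞) (fun t : ℝ => Real.exp (-(t ^ 2 / 2))) := by
      apply ContDiff.exp; apply ContDiff.neg; exact (contDiff_id.pow 2).div_const 2
    exact this.of_le (mod_cast le_top)
  -- derivative formula
  have hder : ∀ x : ℝ, iteratedDeriv j (fun y : ℝ => Real.exp (-y ^ 2 / ℏ)) x
      = c ^ j * ((-1 : ℝ) ^ j * Polynomial.aeval (c * x) (Polynomial.hermite j)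
          * Real.exp (-((c * x) ^ 2 / 2))) := by
    intro x
    have h1 : (fun y : ℝ => Real.exp (-y ^ 2 / ℏ))
        = fun y : ℝ => (fun t : ℝ => Real.exp (-(t ^ 2 / 2))) (c * y) := funext heq
    rw [h1, iteratedDeriv_comp_const_mul hsmooth c]
    simp only
    rw [iteratedDeriv_eq_iterate, Polynomial.deriv_gaussian_eq_hermite_mul_gaussian]
  -- pointwise bound pieces
  have hsplit : ∀ x : ℝ, Real.exp (-x ^ 2 / ℏ)
      = Real.exp (-x ^ 2 / (2 * ℏ)) * Real.exp (-x ^ 2 / (4 * ℏ))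
        * Real.exp (-(1 / (4 * ℏ)) * x ^ 2) := by
    intro x
    rw [← Real.exp_add, ← Real.exp_add]
    congr 1
    field_simp
    ring
  have hterm1 : ∀ x : ℝ, |x| ^ r * Real.exp (-x ^ 2 / (2 * ℏ))
      ≤ s ^ r * (r.factorial * Real.exp 2) := by
    intro x
    have hxy : |x| = s * |x / s| := by
      rw [abs_div, abs_of_pos hs, mul_div_cancel₀ _ (ne_of_gt hs)]
    have h2 : Real.exp (-x ^ 2 / (2 * ℏ)) ≤ Real.exp (-((x / s) ^ 2 / 8)) := by
      apply Real.exp_le_exp.mpr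
      rw [div_pow, hs2]
      rw [neg_div, neg_le_neg_iff, div_div]
      apply div_le_div_of_nonneg_left (sq_nonneg x) (by positivity)
      linarith
    calc |x| ^ r * Real.exp (-x ^ 2 / (2 * ℏ))
        = s ^ r * (|x / s| ^ r * Real.exp (-x ^ 2 / (2 * ℏ))) := by rw [hxy, mul_pow]; ring
    _ ≤ s ^ r * (|x / s| ^ r * Real.exp (-((x / s) ^ 2 / 8))) := by
        refine mul_le_mul_of_nonneg_left (mul_le_mul_of_nonneg_left h2 (by positivity))
          (by positivity)
    _ ≤ s ^ r * (r.factorial * Real.exp 2) :=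
        mul_le_mul_of_nonneg_left (gauss_pow_bound r (x / s)) (by positivity)
  have hterm2 : ∀ x : ℝ, |(Polynomial.aeval (c * x) (Polynomial.hermite j) : ℝ)|
      * Real.exp (-x ^ 2 / (4 * ℏ)) ≤ Cp := by
    intro x
    have hexp : -x ^ 2 / (4 * ℏ) = -((c * x) ^ 2 / 8) := by
      have : (c * x) ^ 2 = 2 / ℏ * x ^ 2 := by rw [mul_pow, hc2]
      rw [this]; field_simp; ring
    have haev : (Polynomial.aeval (c * x) (Polynomial.hermite j) : ℝ)
        = ((Polynomial.hermite j).map (Int.castRingHom ℝ)).eval (c * x) := by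
      rw [Polynomial.aeval_def, Polynomial.eval₂_eq_eval_map]; rfl
    rw [hexp, haev]
    exact hCp (c * x)
  set K : ℝ := s ^ r * (r.factorial * Real.exp 2) * (c ^ j * Cp) with hK_def
  have hpt : ∀ x : ℝ, |x| ^ r * |iteratedDeriv j (fun y : ℝ => Real.exp (-y ^ 2 / ℏ)) x|
      ≤ K * Real.exp (-(1 / (4 * ℏ)) * x ^ 2) := by
    intro x
    have habs : |iteratedDeriv j (fun y : ℝ => Real.exp (-y ^ 2 / ℏ)) x|
        = c ^ j * (|(Polynomial.aeval (c * x) (Polynomial.hermite j) : ℝ)|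
            * Real.exp (-x ^ 2 / ℏ)) := by
      rw [hder x, ← heq x, abs_mul, abs_mul, abs_mul, abs_pow, abs_pow, abs_neg, abs_one,
        one_pow, one_mul, abs_of_pos hc, Real.abs_exp]
    rw [habs, hsplit x]
    calc |x| ^ r * (c ^ j * (|(Polynomial.aeval (c * x) (Polynomial.hermite j) : ℝ)|
          * (Real.exp (-x ^ 2 / (2 * ℏ)) * Real.exp (-x ^ 2 / (4 * ℏ))
            * Real.exp (-(1 / (4 * ℏ)) * x ^ 2))))
        = (|x| ^ r * Real.exp (-x ^ 2 / (2 * ℏ)))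
          * (c ^ j * (|(Polynomial.aeval (c * x) (Polynomial.hermite j) : ℝ)|
            * Real.exp (-x ^ 2 / (4 * ℏ)))) * Real.exp (-(1 / (4 * ℏ)) * x ^ 2) := by ring
    _ ≤ (s ^ r * (r.factorial * Real.exp 2)) * (c ^ j * Cp)
          * Real.exp (-(1 / (4 * ℏ)) * x ^ 2) := by
        refine mul_le_mul_of_nonneg_right ?_ (Real.exp_nonneg _)
        refine mul_le_mul (hterm1 x)
          (mul_le_mul_of_nonneg_left (hterm2 x) (by positivity)) (by positivity) (by positivity)
    _ = K * Real.exp (-(1 / (4 * ℏ)) * x ^ 2) := by rw [hK_def]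
  -- continuity / integrability
  have hcontH : Continuous fun x : ℝ => (Polynomial.aeval x (Polynomial.hermite j) : ℝ) :=
    (Polynomial.hermite j).continuous_aeval
  have hcontF : Continuous fun x : ℝ =>
      |x| ^ r * |iteratedDeriv j (fun y : ℝ => Real.exp (-y ^ 2 / ℏ)) x| := by
    have : (fun x : ℝ => |x| ^ r * |iteratedDeriv j (fun y : ℝ => Real.exp (-y ^ 2 / ℏ)) x|)
        = fun x : ℝ => |x| ^ r * |c ^ j * ((-1 : ℝ) ^ j
            * Polynomial.aeval (c * x) (Polynomial.hermite j)
            * Real.exp (-((c * x) ^ 2 / 2)))| := by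
      funext x; rw [hder x]
    rw [this]
    have hA : Continuous fun x : ℝ => (Polynomial.aeval (c * x) (Polynomial.hermite j) : ℝ) :=
      hcontH.comp (continuous_const.mul continuous_id)
    have hE : Continuous fun x : ℝ => Real.exp (-((c * x) ^ 2 / 2)) :=
      Real.continuous_exp.comp
        ((((continuous_const.mul continuous_id).pow 2).div_const 2).neg)
    exact (continuous_abs.pow r).mul
      (Continuous.abs (continuous_const.mul ((continuous_const.mul hA).mul hE)))
  have h4 : (0:ℝ) < 1 / (4 * ℏ) := by positivity
  have hcontG : Continuous fun x : ℝ => K * Real.exp (-(1 / (4 * ℏ)) * x ^ 2) := by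
    apply Continuous.mul continuous_const
    exact Real.continuous_exp.comp ((continuous_const.mul (continuous_id.pow 2)))
  have hintF : IntervalIntegrable (fun x : ℝ =>
      |x| ^ r * |iteratedDeriv j (fun y : ℝ => Real.exp (-y ^ 2 / ℏ)) x|) volume a b :=
    hcontF.intervalIntegrable a b
  have hintG : IntervalIntegrable (fun x : ℝ =>
      K * Real.exp (-(1 / (4 * ℏ)) * x ^ 2)) volume a b :=
    hcontG.intervalIntegrable a b
  -- compare integrals
  have hstep1 : (∫ x in a..b, |x| ^ r * |iteratedDeriv j (fun y : ℝ => Real.exp (-y ^ 2 / ℏ)) x|)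
      ≤ ∫ x in a..b, K * Real.exp (-(1 / (4 * ℏ)) * x ^ 2) :=
    intervalIntegral.integral_mono_on hab hintF hintG (fun x _ => hpt x)
  have hK0 : 0 ≤ K := by positivity
  have hstep2 : (∫ x in a..b, K * Real.exp (-(1 / (4 * ℏ)) * x ^ 2))
      ≤ K * (2 * Real.sqrt π * s) := by
    rw [intervalIntegral.integral_const_mul]
    refine mul_le_mul_of_nonneg_left ?_ hK0
    have hle : (∫ x in a..b, Real.exp (-(1 / (4 * ℏ)) * x ^ 2))
        ≤ ∫ x : ℝ, Real.exp (-(1 / (4 * ℏ)) * x ^ 2) := by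
      rw [intervalIntegral.integral_of_le hab]
      exact setIntegral_le_integral (integrable_exp_neg_mul_sq h4)
        (Filter.Eventually.of_forall fun x => (Real.exp_pos _).le)
    have hg : (∫ x : ℝ, Real.exp (-(1 / (4 * ℏ)) * x ^ 2)) = Real.sqrt (π / (1 / (4 * ℏ))) :=
      integral_gaussian _
    have hval : Real.sqrt (π / (1 / (4 * ℏ))) = 2 * Real.sqrt π * s := by
      have h1 : π / (1 / (4 * ℏ)) = (2 * Real.sqrt π * s) ^ 2 := by
        rw [mul_pow, mul_pow, Real.sq_sqrt Real.pi_pos.le, hs2]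
        field_simp; ring
      rw [h1, Real.sqrt_sq (by positivity)]
    calc (∫ x in a..b, Real.exp (-(1 / (4 * ℏ)) * x ^ 2))
        ≤ ∫ x : ℝ, Real.exp (-(1 / (4 * ℏ)) * x ^ 2) := hle
    _ = 2 * Real.sqrt π * s := by rw [hg, hval]
  -- identify the power of ℏ
  have key : s ^ r * s / s ^ j = ℏ ^ (((r : ℝ) - j) / 2 + 1 / 2) := by
    rw [hs_def, Real.sqrt_eq_rpow,
      ← Real.rpow_natCast (ℏ ^ ((1:ℝ)/2)) r, ← Real.rpow_natCast (ℏ ^ ((1:ℝ)/2)) j,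
      ← Real.rpow_mul hℏ.le, ← Real.rpow_mul hℏ.le, ← Real.rpow_add hℏ, ← Real.rpow_sub hℏ]
    congr 1
    ring
  have hfinal : K * (2 * Real.sqrt π * s)
      = (r.factorial * Real.exp 2) * Cp * (2 * Real.sqrt π) * (Real.sqrt 2) ^ j
        * ℏ ^ (((r : ℝ) - j) / 2 + 1 / 2) := by
    rw [← key, hK_def, hcs, div_pow]
    field_simp
  calc (∫ x in a..b, |x| ^ r * |iteratedDeriv j (fun y : ℝ => Real.exp (-y ^ 2 / ℏ)) x|)
      ≤ K * (2 * Real.sqrt π * s) := hstep1.trans hstep2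
  _ = _ := hfinal
end

section
/- Let L be a graded Lie algebra over ℂ[[t]] with differential ∂̄, concentrated so that brackets of elements of 𝔪-adic positive order make sense, and suppose Φ ∈ L¹ ⊗ 𝔪 satisfies the fixed-point equation Φ = Π - (1/2) H[Φ, Φ], where ∂̄Π = 0, and H is an operator satisfying Id - ι∘P = ∂̄H + H∂̄ with P∘ι = Id (a homotopy retraction onto cohomology). Then Φ satisfies the Maurer–Cartan equation ∂̄Φ + (1/2)[Φ,Φ] = 0 if and only if P[Φ, Φ] = 0. -/
/-- Kuranishi's method: for a dgLa `L` over `ℂ[[t]]` (abstracted here by a module with a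
complete decreasing filtration `F` recording the `𝔪`-adic order, a differential `d`, a bracket
`br` which on degree-one elements is graded symmetric, and homotopy-retraction data
`(H, P, ι)` onto cohomology), a solution `Φ` of the fixed-point equation
`Φ = Π - (1/2) H [Φ, Φ]` with `d Π = 0` satisfies the Maurer–Cartan equation
`d Φ + (1/2)[Φ, Φ] = 0` if and only if `P [Φ, Φ] = 0`. -/
theorem stmt_6 {L : Type*} [AddCommGroup L] [Module ℂ L]
    (d : L →ₗ[ℂ] L) (br : L →ₗ[ℂ] L →ₗ[ℂ] L)
    (H P ι : L →ₗ[ℂ] L)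
    (F : ℕ → Submodule ℂ L)
    (hF0 : F 0 = ⊤) (hFmono : ∀ i j, i ≤ j → F j ≤ F i)
    (hFsep : ∀ x : L, (∀ n, x ∈ F n) → x = 0)
    (hFbr : ∀ i j x y, x ∈ F i → y ∈ F j → br x y ∈ F (i + j))
    (hFd : ∀ n x, x ∈ F n → d x ∈ F n)
    (hFH : ∀ n x, x ∈ F n → H x ∈ F n)
    (hFP : ∀ n x, x ∈ F n → P x ∈ F n)
    (hFι : ∀ n x, x ∈ F n → ι x ∈ F n)
    (hd2 : ∀ x, d (d x) = 0)
    (hhom : ∀ x, x - ι (P x) = d (H x) + H (d x))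
    (hPι : ∀ x, P (ι x) = x)
    (hPd : ∀ x, P (d x) = 0)
    (hdι : ∀ x, d (ι x) = 0)
    (hLeib : ∀ x y, d (br x y) = br (d x) y - br x (d y))
    (hsym : ∀ x y, br x y = br y x)
    (hJac : ∀ x y z, br (br x y) z = br x (br y z) - br y (br x z))
    (A Φ : L) (hAF : A ∈ F 1) (hΦF : Φ ∈ F 1)
    (hA : d A = 0)
    (hfix : Φ = A - (1 / 2 : ℂ) • H (br Φ Φ)) :
    d Φ + (1 / 2 : ℂ) • br Φ Φ = 0 ↔ P (br Φ Φ) = 0 := by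
  set x := br Φ Φ with hx
  have hdx : d x = 0 := by
    rw [hx, hLeib, hsym (d Φ) Φ, sub_self]
  have hdHx : d (H x) = x - ι (P x) := by
    have h1 := hhom x
    rw [hdx, map_zero, add_zero] at h1
    exact h1.symm
  have hdΦ : d Φ = -((1 / 2 : ℂ) • (x - ι (P x))) := by
    have h2 := congrArg d hfix
    rw [map_sub, map_smul, hA, hdHx, zero_sub] at h2
    exact h2
  have key : d Φ + (1 / 2 : ℂ) • x = (1 / 2 : ℂ) • ι (P x) := by
    rw [hdΦ, smul_sub]
    abel
  constructor
  · intro h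
    rw [key] at h
    have hι : ι (P x) = 0 := by
      have := smul_eq_zero.mp h
      rcases this with h' | h'
      · norm_num at h'
      · exact h'
    have := congrArg P hι
    rwa [hPι, map_zero] at this
  · intro h
    rw [key, h, map_zero, smul_zero]
end

section
/- Let P₁ = {x ∈ ℝ² : x₂ = 0} and P₂ = {x ∈ ℝ² : x₁ = 0}, and let α_i = h_i(x,ħ) dx_i (i = 1,2) be ħ-dependent 1-forms satisfying: for all j ≥ 0 and β ≥ 0, ∫_{|x_i| < δ} |x_i|^β sup_{x over the line {x_i = const}} |∇^j h_i| dx_i ≤ D ħ^{-(j + s_i - β - 1)/2}. Then the 2-form α₁ ∧ α₂ = h₁h₂ dx₁∧dx₂ satisfies the analogous estimate with respect to the point Q = {0}: for all j and all monomials x₁^{β₁} x₂^{β₂}, ∫∫ x₁^{β₁} x₂^{β₂} |∇^j (h₁ h₂)| dx₁ dx₂ ≤ D' ħ^{-(j + s₁ + s₂ - β₁ - β₂ - 2)/2}. -/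
open MeasureTheory Real Set

/-- The norm of the `j`-th total derivative of a function on `ℝ²`. -/
noncomputable def dnorm (j : ℕ) (h : ℝ × ℝ → ℝ) (p : ℝ × ℝ) : ℝ :=
  ‖iteratedFDeriv ℝ j h p‖

theorem stmt_12_aux (δ : ℝ) (f₁ f₂ : ℝ × ℝ → ℝ)
    (hs₁ : ContDiff ℝ (⊤ : ℕ∞) f₁) (hs₂ : ContDiff ℝ (⊤ : ℕ∞) f₂) (j β₁ β₂ : ℕ)
    (C₁ C₂ : ℕ → ℝ)
    (hC₁ : ∀ i, (∫ t in Ioo (-δ) δ,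
        |t| ^ β₁ * ⨆ s : Icc (-δ) δ, dnorm i f₁ (t, (s : ℝ))) ≤ C₁ i)
    (hC₂ : ∀ i, (∫ t in Ioo (-δ) δ,
        |t| ^ β₂ * ⨆ s : Icc (-δ) δ, dnorm i f₂ ((s : ℝ), t)) ≤ C₂ i) :
    (∫ p in (Ioo (-δ) δ) ×ˢ (Ioo (-δ) δ),
        |p.1| ^ β₁ * |p.2| ^ β₂ * dnorm j (fun q => f₁ q * f₂ q) p)
      ≤ ∑ i ∈ Finset.range (j + 1), (j.choose i : ℝ) * (C₁ i * C₂ (j - i)) := by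
  have hc₁ : ∀ i : ℕ, Continuous fun p : ℝ × ℝ => dnorm i f₁ p := fun i =>
    (hs₁.continuous_iteratedFDeriv (by exact_mod_cast le_top)).norm
  have hc₂ : ∀ i : ℕ, Continuous fun p : ℝ × ℝ => dnorm i f₂ p := fun i =>
    (hs₂.continuous_iteratedFDeriv (by exact_mod_cast le_top)).norm
  have hFc : ∀ i : ℕ,
      Continuous fun t : ℝ => ⨆ s : Icc (-δ) δ, dnorm i f₁ (t, (s : ℝ)) := by
    intro i
    have : (fun t : ℝ => ⨆ s : Icc (-δ) δ, dnorm i f₁ (t, (s : ℝ)))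
        = fun t => sSup ((fun s => dnorm i f₁ (t, s)) '' Icc (-δ) δ) := by
      funext t; rw [sSup_image']
    rw [this]
    exact isCompact_Icc.continuous_sSup (by fun_prop)
  have hGc : ∀ i : ℕ,
      Continuous fun t : ℝ => ⨆ s : Icc (-δ) δ, dnorm i f₂ ((s : ℝ), t) := by
    intro i
    have : (fun t : ℝ => ⨆ s : Icc (-δ) δ, dnorm i f₂ ((s : ℝ), t))
        = fun t => sSup ((fun s => dnorm i f₂ (s, t)) '' Icc (-δ) δ) := by
      funext t; rw [sSup_image']
    rw [this]
    exact isCompact_Icc.continuous_sSup (by fun_prop)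
  have hFn : ∀ (i : ℕ) (t : ℝ), 0 ≤ ⨆ s : Icc (-δ) δ, dnorm i f₁ (t, (s : ℝ)) :=
    fun i t => Real.iSup_nonneg fun s => norm_nonneg _
  have hGn : ∀ (i : ℕ) (t : ℝ), 0 ≤ ⨆ s : Icc (-δ) δ, dnorm i f₂ ((s : ℝ), t) :=
    fun i t => Real.iSup_nonneg fun s => norm_nonneg _
  have hbdd₁ : ∀ (i : ℕ) (t : ℝ),
      BddAbove (Set.range fun s : Icc (-δ) δ => dnorm i f₁ (t, (s : ℝ))) := by
    intro i t
    rw [show (fun s : Icc (-δ) δ => dnorm i f₁ (t, (s : ℝ)))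
        = (fun s => dnorm i f₁ (t, s)) ∘ Subtype.val from rfl, Set.range_comp,
      Subtype.range_coe]
    exact (isCompact_Icc.image (by fun_prop)).bddAbove
  have hbdd₂ : ∀ (i : ℕ) (t : ℝ),
      BddAbove (Set.range fun s : Icc (-δ) δ => dnorm i f₂ ((s : ℝ), t)) := by
    intro i t
    rw [show (fun s : Icc (-δ) δ => dnorm i f₂ ((s : ℝ), t))
        = (fun s => dnorm i f₂ (s, t)) ∘ Subtype.val from rfl, Set.range_comp,
      Subtype.range_coe]
    exact (isCompact_Icc.image (by fun_prop)).bddAbove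
  -- pointwise Leibniz bound
  have hptwise : ∀ p ∈ (Ioo (-δ) δ) ×ˢ (Ioo (-δ) δ),
      |p.1| ^ β₁ * |p.2| ^ β₂ * dnorm j (fun q => f₁ q * f₂ q) p ≤
        ∑ i ∈ Finset.range (j + 1),
          ((j.choose i : ℝ) * (|p.1| ^ β₁ * ⨆ s : Icc (-δ) δ, dnorm i f₁ (p.1, (s : ℝ)))) *
            (|p.2| ^ β₂ * ⨆ s : Icc (-δ) δ, dnorm (j - i) f₂ ((s : ℝ), p.2)) := by
    rintro p ⟨hp1, hp2⟩
    have hleib : dnorm j (fun q => f₁ q * f₂ q) p ≤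
        ∑ i ∈ Finset.range (j + 1),
          (j.choose i : ℝ) * dnorm i f₁ p * dnorm (j - i) f₂ p :=
      norm_iteratedFDeriv_mul_le hs₁ hs₂ p (by exact_mod_cast le_top)
    calc |p.1| ^ β₁ * |p.2| ^ β₂ * dnorm j (fun q => f₁ q * f₂ q) p
        ≤ |p.1| ^ β₁ * |p.2| ^ β₂ * ∑ i ∈ Finset.range (j + 1),
            (j.choose i : ℝ) * dnorm i f₁ p * dnorm (j - i) f₂ p :=
          mul_le_mul_of_nonneg_left hleib (by positivity)
      _ = ∑ i ∈ Finset.range (j + 1),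
            ((j.choose i : ℝ) * (|p.1| ^ β₁ * dnorm i f₁ p)) *
              (|p.2| ^ β₂ * dnorm (j - i) f₂ p) := by
          rw [Finset.mul_sum]; exact Finset.sum_congr rfl fun i _ => by ring
      _ ≤ _ := by
          apply Finset.sum_le_sum
          intro i _
          have hA : dnorm i f₁ p ≤ ⨆ s : Icc (-δ) δ, dnorm i f₁ (p.1, (s : ℝ)) := by
            simpa using le_ciSup (hbdd₁ i p.1) (⟨p.2, Ioo_subset_Icc_self hp2⟩ : Icc (-δ) δ)
          have hB : dnorm (j - i) f₂ p ≤
              ⨆ s : Icc (-δ) δ, dnorm (j - i) f₂ ((s : ℝ), p.2) := by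
            simpa using le_ciSup (hbdd₂ (j - i) p.2) (⟨p.1, Ioo_subset_Icc_self hp1⟩ : Icc (-δ) δ)
          have h1 : (j.choose i : ℝ) * (|p.1| ^ β₁ * dnorm i f₁ p) ≤
              (j.choose i : ℝ) * (|p.1| ^ β₁ * ⨆ s : Icc (-δ) δ, dnorm i f₁ (p.1, (s : ℝ))) :=
            mul_le_mul_of_nonneg_left (mul_le_mul_of_nonneg_left hA (by positivity))
              (by positivity)
          have h2 : |p.2| ^ β₂ * dnorm (j - i) f₂ p ≤
              |p.2| ^ β₂ * ⨆ s : Icc (-δ) δ, dnorm (j - i) f₂ ((s : ℝ), p.2) :=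
            mul_le_mul_of_nonneg_left hB (by positivity)
          exact mul_le_mul h1 h2 (mul_nonneg (by positivity) (norm_nonneg _))
            (mul_nonneg (by positivity) (mul_nonneg (by positivity) (hFn i p.1)))
  -- integrabilities
  have hLint : IntegrableOn
      (fun p : ℝ × ℝ => |p.1| ^ β₁ * |p.2| ^ β₂ * dnorm j (fun q => f₁ q * f₂ q) p)
      ((Ioo (-δ) δ) ×ˢ (Ioo (-δ) δ)) := by
    have hcont : Continuous
        (fun p : ℝ × ℝ => |p.1| ^ β₁ * |p.2| ^ β₂ * dnorm j (fun q => f₁ q * f₂ q) p) := by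
      have hdn : Continuous fun p : ℝ × ℝ => dnorm j (fun q => f₁ q * f₂ q) p :=
        ((hs₁.mul hs₂).continuous_iteratedFDeriv (by exact_mod_cast le_top)).norm
      fun_prop
    exact (hcont.continuousOn.integrableOn_compact (isCompact_Icc.prod isCompact_Icc)).mono_set
      (Set.prod_mono Ioo_subset_Icc_self Ioo_subset_Icc_self)
  have hφint : ∀ i : ℕ, IntegrableOn
      (fun t : ℝ => |t| ^ β₁ * ⨆ s : Icc (-δ) δ, dnorm i f₁ (t, (s : ℝ))) (Ioo (-δ) δ) := by
    intro i
    have hcont : Continuous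
        (fun t : ℝ => |t| ^ β₁ * ⨆ s : Icc (-δ) δ, dnorm i f₁ (t, (s : ℝ))) :=
      (continuous_abs.pow β₁).mul (hFc i)
    exact (hcont.continuousOn.integrableOn_compact isCompact_Icc).mono_set Ioo_subset_Icc_self
  have hψint : ∀ i : ℕ, IntegrableOn
      (fun t : ℝ => |t| ^ β₂ * ⨆ s : Icc (-δ) δ, dnorm i f₂ ((s : ℝ), t)) (Ioo (-δ) δ) := by
    intro i
    have hcont : Continuous
        (fun t : ℝ => |t| ^ β₂ * ⨆ s : Icc (-δ) δ, dnorm i f₂ ((s : ℝ), t)) :=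
      (continuous_abs.pow β₂).mul (hGc i)
    exact (hcont.continuousOn.integrableOn_compact isCompact_Icc).mono_set Ioo_subset_Icc_self
  have hTint : ∀ i : ℕ, IntegrableOn
      (fun p : ℝ × ℝ =>
        ((j.choose i : ℝ) * (|p.1| ^ β₁ * ⨆ s : Icc (-δ) δ, dnorm i f₁ (p.1, (s : ℝ)))) *
          (|p.2| ^ β₂ * ⨆ s : Icc (-δ) δ, dnorm (j - i) f₂ ((s : ℝ), p.2)))
      ((Ioo (-δ) δ) ×ˢ (Ioo (-δ) δ)) := by
    intro i
    rw [IntegrableOn, Measure.volume_eq_prod, ← Measure.prod_restrict]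
    exact ((hφint i).const_mul _).mul_prod (hψint (j - i))
  have hI₁nonneg : ∀ i : ℕ,
      0 ≤ ∫ t in Ioo (-δ) δ, |t| ^ β₁ * ⨆ s : Icc (-δ) δ, dnorm i f₁ (t, (s : ℝ)) :=
    fun i => setIntegral_nonneg measurableSet_Ioo fun t _ =>
      mul_nonneg (by positivity) (hFn i t)
  have hI₂nonneg : ∀ i : ℕ,
      0 ≤ ∫ t in Ioo (-δ) δ, |t| ^ β₂ * ⨆ s : Icc (-δ) δ, dnorm i f₂ ((s : ℝ), t) :=
    fun i => setIntegral_nonneg measurableSet_Ioo fun t _ =>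
      mul_nonneg (by positivity) (hGn i t)
  calc (∫ p in (Ioo (-δ) δ) ×ˢ (Ioo (-δ) δ),
        |p.1| ^ β₁ * |p.2| ^ β₂ * dnorm j (fun q => f₁ q * f₂ q) p)
      ≤ ∫ p in (Ioo (-δ) δ) ×ˢ (Ioo (-δ) δ),
          ∑ i ∈ Finset.range (j + 1),
            ((j.choose i : ℝ) * (|p.1| ^ β₁ * ⨆ s : Icc (-δ) δ, dnorm i f₁ (p.1, (s : ℝ)))) *
              (|p.2| ^ β₂ * ⨆ s : Icc (-δ) δ, dnorm (j - i) f₂ ((s : ℝ), p.2)) := by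
        refine setIntegral_mono_on hLint ?_ (measurableSet_Ioo.prod measurableSet_Ioo) hptwise
        exact integrable_finset_sum _ fun i _ => hTint i
    _ = ∑ i ∈ Finset.range (j + 1),
          ∫ p in (Ioo (-δ) δ) ×ˢ (Ioo (-δ) δ),
            ((j.choose i : ℝ) * (|p.1| ^ β₁ * ⨆ s : Icc (-δ) δ, dnorm i f₁ (p.1, (s : ℝ)))) *
              (|p.2| ^ β₂ * ⨆ s : Icc (-δ) δ, dnorm (j - i) f₂ ((s : ℝ), p.2)) :=
        integral_finset_sum _ fun i _ => hTint i
    _ = ∑ i ∈ Finset.range (j + 1),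
          (j.choose i : ℝ) *
            ((∫ t in Ioo (-δ) δ, |t| ^ β₁ * ⨆ s : Icc (-δ) δ, dnorm i f₁ (t, (s : ℝ))) *
              (∫ t in Ioo (-δ) δ, |t| ^ β₂ * ⨆ s : Icc (-δ) δ, dnorm (j - i) f₂ ((s : ℝ), t))) := by
        refine Finset.sum_congr rfl fun i _ => ?_
        rw [Measure.volume_eq_prod,
          setIntegral_prod_mul
            (fun t : ℝ => (j.choose i : ℝ) * (|t| ^ β₁ * ⨆ s : Icc (-δ) δ, dnorm i f₁ (t, (s : ℝ))))
            (fun t : ℝ => |t| ^ β₂ * ⨆ s : Icc (-δ) δ, dnorm (j - i) f₂ ((s : ℝ), t)),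
          integral_const_mul, mul_assoc]
    _ ≤ ∑ i ∈ Finset.range (j + 1), (j.choose i : ℝ) * (C₁ i * C₂ (j - i)) := by
        refine Finset.sum_le_sum fun i _ => ?_
        refine mul_le_mul_of_nonneg_left ?_ (by positivity)
        exact mul_le_mul (hC₁ i) (hC₂ (j - i)) (hI₂nonneg (j - i))
          ((hI₁nonneg i).trans (hC₁ i))

/-- The transversal case of the product lemma for forms with asymptotic support:
if `α₁ = h₁ dx₁` has asymptotic support of weight `s₁` on `P₁ = {x₂ = 0}` (concentration in the
`x₁`-integral with suprema along the lines `{x₁ = const}`) and `α₂ = h₂ dx₂` has asymptotic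
support of weight `s₂` on `P₂ = {x₁ = 0}`, then `α₁ ∧ α₂ = h₁h₂ dx₁∧dx₂` has asymptotic support
of weight `s₁ + s₂` at the transversal intersection `Q = {0}`. -/
theorem stmt_12 (δ : ℝ) (hδ : 0 < δ) (s₁ s₂ : ℤ)
    (h₁ h₂ : ℝ × ℝ → ℝ → ℝ)
    (hsm₁ : ∀ ℏ : ℝ, 0 < ℏ → ContDiff ℝ (⊤ : ℕ∞) (fun p => h₁ p ℏ))
    (hsm₂ : ∀ ℏ : ℝ, 0 < ℏ → ContDiff ℝ (⊤ : ℕ∞) (fun p => h₂ p ℏ))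
    (H1 : ∀ j β : ℕ, ∃ D : ℝ, ∀ ℏ : ℝ, 0 < ℏ → ℏ ≤ 1 →
      (∫ t in Ioo (-δ) δ,
          |t| ^ β * ⨆ s : Icc (-δ) δ, dnorm j (fun p => h₁ p ℏ) (t, (s : ℝ)))
        ≤ D * ℏ ^ (-((j : ℝ) + (s₁ : ℝ) - (β : ℝ) - 1) / 2))
    (H2 : ∀ j β : ℕ, ∃ D : ℝ, ∀ ℏ : ℝ, 0 < ℏ → ℏ ≤ 1 →
      (∫ t in Ioo (-δ) δ,
          |t| ^ β * ⨆ s : Icc (-δ) δ, dnorm j (fun p => h₂ p ℏ) ((s : ℝ), t))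
        ≤ D * ℏ ^ (-((j : ℝ) + (s₂ : ℝ) - (β : ℝ) - 1) / 2)) :
    ∀ j β₁ β₂ : ℕ, ∃ D' : ℝ, ∀ ℏ : ℝ, 0 < ℏ → ℏ ≤ 1 →
      (∫ p in (Ioo (-δ) δ) ×ˢ (Ioo (-δ) δ),
          |p.1| ^ β₁ * |p.2| ^ β₂ * dnorm j (fun q => h₁ q ℏ * h₂ q ℏ) p)
        ≤ D' * ℏ ^ (-((j : ℝ) + (s₁ : ℝ) + (s₂ : ℝ) - (β₁ : ℝ) - (β₂ : ℝ) - 2) / 2) := by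
  intro j β₁ β₂
  choose D₁ hD₁ using fun i => H1 i β₁
  choose D₂ hD₂ using fun i => H2 i β₂
  refine ⟨∑ i ∈ Finset.range (j + 1), (j.choose i : ℝ) * D₁ i * D₂ (j - i), ?_⟩
  intro ℏ hℏ hℏ1
  have key := stmt_12_aux δ (fun p => h₁ p ℏ) (fun p => h₂ p ℏ) (hsm₁ ℏ hℏ) (hsm₂ ℏ hℏ)
    j β₁ β₂ (fun i => D₁ i * ℏ ^ (-((i : ℝ) + (s₁ : ℝ) - (β₁ : ℝ) - 1) / 2))
    (fun i => D₂ i * ℏ ^ (-((i : ℝ) + (s₂ : ℝ) - (β₂ : ℝ) - 1) / 2))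
    (fun i => hD₁ i ℏ hℏ hℏ1) (fun i => hD₂ i ℏ hℏ hℏ1)
  refine key.trans (le_of_eq ?_)
  rw [Finset.sum_mul]
  refine Finset.sum_congr rfl fun i hi => ?_
  have hle : i ≤ j := Nat.lt_succ_iff.mp (Finset.mem_range.mp hi)
  have hij : ((j - i : ℕ) : ℝ) = (j : ℝ) - i := by push_cast [Nat.cast_sub hle]; ring
  rw [mul_mul_mul_comm (D₁ i) _ (D₂ (j - i)) _, ← Real.rpow_add hℏ,
    show -((i : ℝ) + (s₁ : ℝ) - (β₁ : ℝ) - 1) / 2 +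
        -(((j - i : ℕ) : ℝ) + (s₂ : ℝ) - (β₂ : ℝ) - 1) / 2
      = -((j : ℝ) + (s₁ : ℝ) + (s₂ : ℝ) - (β₁ : ℝ) - (β₂ : ℝ) - 2) / 2 by rw [hij]; ring]
  ring
end

section
/- Let Φ = Σ_{a ∈ W} Φ^{(a)} be a finite sum (for each fixed order N in t) of elements of a dgLa, where the supports satisfy: for a ≠ a', the bracket [Φ^{(a)}, Φ^{(a')}] = 0 and [Φ^{(a)}, Φ^{(a)}] = 0 (in the quotient dgLa modulo exponentially small terms). If Φ satisfies the Maurer–Cartan equation ∂̄Φ + (1/2)[Φ, Φ] = 0, then each summand satisfies ∂̄Φ^{(a)} = 0, and in particular each Φ^{(a)} is itself a Maurer–Cartan element. -/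
/-- Splitting of the Maurer–Cartan equation into Fourier modes: if `Φ = Σ_{a} Φ^{(a)}` is a
finite decomposition of a Maurer–Cartan element of a dgLa, compatible with a direct-sum
decomposition (projections `π_a` commuting with the differential), such that all brackets
`[Φ^{(a)}, Φ^{(a')}] = 0` (including `a = a'`), then each summand satisfies `∂̄ Φ^{(a)} = 0`;
in particular each `Φ^{(a)}` is itself a Maurer–Cartan element. -/
theorem stmt_17 {L : Type*} [AddCommGroup L] [Module ℂ L] {W : Type*} [Fintype W] [DecidableEq W]
    (d : L →ₗ[ℂ] L) (br : L →ₗ[ℂ] L →ₗ[ℂ] L)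
    (π : W → L →ₗ[ℂ] L) (Φ : W → L)
    (hπd : ∀ a x, π a (d x) = d (π a x))
    (hπΦ : ∀ a a', π a (Φ a') = if a = a' then Φ a' else 0)
    (hbr : ∀ a a', br (Φ a) (Φ a') = 0)
    (hMC : d (∑ a, Φ a) + (1 / 2 : ℂ) • br (∑ a, Φ a) (∑ a, Φ a) = 0) :
    ∀ a, d (Φ a) = 0 ∧ d (Φ a) + (1 / 2 : ℂ) • br (Φ a) (Φ a) = 0 := by
  have hbr0 : br (∑ a, Φ a) (∑ a, Φ a) = 0 := by
    simp only [map_sum, LinearMap.sum_apply, hbr, Finset.sum_const_zero]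
  rw [hbr0, smul_zero, add_zero] at hMC
  intro a
  have h : d (Φ a) = 0 := by
    have := congrArg (π a) hMC
    rw [hπd, map_zero, map_sum] at this
    simpa [hπΦ] using this
  exact ⟨h, by simp [h, hbr]⟩
end
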